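/- The square of a path Pₙ² satisfies MAG(Pₙ²) = n: the identity labelling vᵢ ↦ i+1 (0 ≤ i ≤ n−1) is an antimagic injection of Pₙ² into {1,...,n}. -/

import Mathlib

/-- `pathPower n k` is the `k`-th power `Pₙᵏ` of the path: vertices `0,…,n−1`,
with `i ∼ j` whenever `1 ≤ |i−j| ≤ k`. -/
def pathPower (n k : ℕ) : SimpleGraph (Fin n) where
  Adj i j := i ≠ j ∧ (i : ℕ) ≤ (j : ℕ) + k ∧ (j : ℕ) ≤ (i : ℕ) + k
  symm := ⟨fun _ _ ⟨h1, h2, h3⟩ => ⟨h1.symm, h3, h2⟩⟩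
  loopless := ⟨fun _ h => h.1 rfl⟩

/-- An injection `f : V(G) → ℤ⁺` is antimagic if distinct edges have distinct label sums. -/
def IsAntimagic {V : Type*} (G : SimpleGraph V) (f : V → ℕ) : Prop :=
  ∀ v w x y : V, G.Adj v w → G.Adj x y → s(v, w) ≠ s(x, y) → f v + f w ≠ f x + f y

/-- `MAG G`: the minimum `k` such that `G` has an antimagic injection into `{1,…,k}`. -/
noncomputable def MAG {V : Type*} (G : SimpleGraph V) : ℕ :=
  sInf {k | ∃ f : V → ℕ, Function.Injective f ∧ (∀ v, f v ∈ Finset.Icc 1 k) ∧ IsAntimagic G f}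

/-! An edge `{i, j}` of `Pₙ²` with `i < j` has `j − i ∈ {1, 2}`, so under the labelling
`i ↦ i + 1` its label sum `i + j + 2` has the parity of `j − i`; the sum thus determines both
`i + j` and `j − i`, hence the edge. Any injection into `{1,…,k}` forces `n ≤ k`. -/

open Finset

theorem card_le_of_injective_Icc {V : Type*} [Fintype V] {f : V → ℕ} {k : ℕ}
    (hf : Function.Injective f) (hk : ∀ v, f v ∈ Icc 1 k) : Fintype.card V ≤ k := by
  simpa using Fintype.card_le_of_injective (fun v => (⟨f v, hk v⟩ : Icc 1 k))
    fun a b h => hf (congrArg Subtype.val h)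

theorem MAG_eq_card_of_isAntimagic {V : Type*} [Fintype V] (G : SimpleGraph V) {f : V → ℕ}
    (hf : Function.Injective f) (hk : ∀ v, f v ∈ Icc 1 (Fintype.card V))
    (ha : IsAntimagic G f) : MAG G = Fintype.card V := by
  have hmem : Fintype.card V ∈ {k | ∃ f : V → ℕ, Function.Injective f ∧
      (∀ v, f v ∈ Icc 1 k) ∧ IsAntimagic G f} := ⟨f, hf, hk, ha⟩
  refine le_antisymm (Nat.sInf_le hmem) (le_csInf ⟨_, hmem⟩ ?_)
  rintro k ⟨g, hg, hgk, -⟩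
  exact card_le_of_injective_Icc hg hgk

theorem isAntimagic_pathPower_two (n : ℕ) :
    IsAntimagic (pathPower n 2) (fun i : Fin n => (i : ℕ) + 1) := by
  rintro v w x y ⟨hvw, hvw₁, hvw₂⟩ ⟨hxy, hxy₁, hxy₂⟩ hne hsum
  simp only [Ne, ← Fin.val_inj] at hvw hxy hsum
  have hsame : ((v : ℕ) = x ∧ (w : ℕ) = y) ∨ ((v : ℕ) = y ∧ (w : ℕ) = x) := by omega
  rcases hsame with ⟨hvx, hwy⟩ | ⟨hvy, hwx⟩
  · exact hne (by rw [Fin.ext hvx, Fin.ext hwy])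
  · exact hne (by rw [Fin.ext hvy, Fin.ext hwx, Sym2.eq_swap])

/-- The identity labelling `vᵢ ↦ i+1` is an antimagic injection of the square of a
path `Pₙ²` into `{1,…,n}`; hence `MAG(Pₙ²) = n`. -/
theorem mag_path_square (n : ℕ) :
    IsAntimagic (pathPower n 2) (fun i : Fin n => (i : ℕ) + 1) ∧
      MAG (pathPower n 2) = n := by
  have hinj : Function.Injective (fun i : Fin n => (i : ℕ) + 1) :=
    fun a b h => Fin.ext (Nat.succ_injective h)
  have hrange : ∀ i : Fin n, (i : ℕ) + 1 ∈ Icc 1 (Fintype.card (Fin n)) := fun i => by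
    simp [i.isLt]
  refine ⟨isAntimagic_pathPower_two n, ?_⟩
  simpa using MAG_eq_card_of_isAntimagic _ hinj hrange (isAntimagic_pathPower_two n)
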